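/- Let $C_1, C_2, \epsilon > 0$, let $H$ be a self-adjoint operator on a Hilbert space with purely discrete spectrum, eigenvalues $E_k \geq -v$ (for some $v \geq 0$) enumerated increasingly with orthonormal eigenbasis $\psi_k$, and suppose that the eigenvalues satisfy $E_k \geq (\pi(l-1)/L)^2 - v$ whenever $k$ exceeds the number of lattice points $y$ with $|y|_2 < l-1$ (as in the Laplacian-comparison setting of the paper). If $\phi$ satisfies $\lVert \chi_{[\lambda,\infty)}(H)\phi\rVert^2 \leq C_1 e^{-(C_2+\epsilon)\sqrt{\lambda + v}} \lVert\phi\rVert^2$ for all $\lambda \geq -v$, then with $\alpha_k = \langle\psi_k,\phi\rangle$, $\sum_{k=1}^\infty e^{C_2\sqrt{\max\{0,E_k\}}} |\alpha_k|^2 \leq C_3 \sum_{k=1}^\infty |\alpha_k|^2$, where $C_3 = e^{C_2(\pi + \lVert V_+\rVert_\infty^{1/2})}(1 + \frac{C_1 C_2 \pi}{1 - e^{-\epsilon\pi}})$. -/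
import Mathlib


open Real Finset

/-- A finite sum of nonnegative terms over a filtered finset is at most the
tsum over the corresponding subtype. -/
lemma stmt7_filter_sum_le_tsum {a : ℕ → ℝ} (ha : ∀ k, 0 ≤ a k) (hsum : Summable a)
    (P : ℕ → Prop) [DecidablePred P] (F : Finset ℕ) :
    ∑ k ∈ F.filter P, a k ≤ ∑' k : {k : ℕ // P k}, a k.1 := by
  have h1 : (∑' k : {k : ℕ // P k}, a k.1) = ∑' k, Set.indicator {k | P k} a k :=
    tsum_subtype {k | P k} a
  rw [h1]
  have h2 : ∑ k ∈ F.filter P, a k = ∑ k ∈ F, Set.indicator {k | P k} a k := by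
    rw [Finset.sum_filter]
    refine Finset.sum_congr rfl fun k _ => ?_
    simp [Set.indicator_apply]
  rw [h2]
  exact Summable.sum_le_tsum F (fun k _ => Set.indicator_nonneg (fun k _ => ha k) k)
    (hsum.indicator _)

/-- Core discrete layer-cake estimate. -/
lemma stmt7_core (C₁ C₂ ε v : ℝ) (hC₁ : 0 < C₁) (hC₂ : 0 < C₂) (hε : 0 < ε) (hv : 0 ≤ v)
    (E : ℕ → ℝ) (hEv : ∀ k, -v ≤ E k)
    (a : ℕ → ℝ) (ha : ∀ k, 0 ≤ a k) (hsum : Summable a)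
    (hproj : ∀ lam : ℝ, -v ≤ lam →
      (∑' k : {k : ℕ // lam ≤ E k}, a k.1)
        ≤ C₁ * Real.exp (-(C₂ + ε) * Real.sqrt (lam + v)) * ∑' k : ℕ, a k) :
    (∑' k : ℕ, Real.exp (C₂ * Real.sqrt (max 0 (E k))) * a k)
      ≤ (Real.exp (C₂ * π)
          + C₁ * (Real.exp (C₂ * π) - 1) * Real.exp (-ε * π) / (1 - Real.exp (-ε * π)))
          * ∑' k : ℕ, a k := by
  classical
  have hπ : (0:ℝ) < π := Real.pi_pos
  set S : ℝ := ∑' k, a k with hS_def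
  have hS0 : 0 ≤ S := tsum_nonneg ha
  set q : ℝ := Real.exp (-ε * π) with hq_def
  have hq0 : 0 < q := Real.exp_pos _
  have hq1 : q < 1 := by
    rw [hq_def, ← Real.exp_zero]
    exact Real.exp_lt_exp.mpr (by nlinarith)
  have h1q : 0 < 1 - q := by linarith
  set r : ℝ := Real.exp (C₂ * π) with hr_def
  have hr0 : 0 < r := Real.exp_pos _
  have hr1 : 1 < r := by
    rw [hr_def, ← Real.exp_zero]
    exact Real.exp_lt_exp.mpr (by positivity)
  set n : ℕ → ℕ := fun k => ⌊Real.sqrt (max 0 (E k)) / π⌋₊ with hn_def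
  -- pointwise bound
  have hpt : ∀ k, Real.exp (C₂ * Real.sqrt (max 0 (E k))) ≤ r * r ^ (n k) := by
    intro k
    have h1 : Real.sqrt (max 0 (E k)) / π < n k + 1 := Nat.lt_floor_add_one _
    rw [div_lt_iff₀ hπ] at h1
    have h3 : r * r ^ (n k) = Real.exp (C₂ * π * (n k + 1)) := by
      rw [hr_def, ← Real.exp_nat_mul, ← Real.exp_add]
      ring_nf
    rw [h3]
    apply Real.exp_le_exp.mpr
    nlinarith [Real.sqrt_nonneg (max 0 (E k))]
  -- shell lower bound on eigenvalues
  have hjE : ∀ j k : ℕ, j < n k → (((j:ℝ)+1) * π)^2 - v ≤ E k := by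
    intro j k hjk
    have h1 : ((j:ℝ)+1) ≤ Real.sqrt (max 0 (E k)) / π := by
      have hle : (j+1 : ℕ) ≤ n k := hjk
      have h1' : ((j+1:ℕ):ℝ) ≤ (n k : ℝ) := by exact_mod_cast hle
      have h1'' : (n k : ℝ) ≤ Real.sqrt (max 0 (E k)) / π :=
        Nat.floor_le (by positivity)
      push_cast at h1'
      linarith
    rw [le_div_iff₀ hπ] at h1
    have hx : 0 ≤ ((j:ℝ)+1) * π := by positivity
    have hsq : Real.sqrt (max 0 (E k)) ^ 2 = max 0 (E k) :=
      Real.sq_sqrt (le_max_left 0 (E k))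
    have h3 : (((j:ℝ)+1) * π)^2 ≤ max 0 (E k) := by
      nlinarith [Real.sqrt_nonneg (max 0 (E k))]
    have h4 : max 0 (E k) ≤ E k + v := max_le (by linarith [hEv k]) (by linarith)
    linarith
  -- projection bound on shells
  have hHj : ∀ j : ℕ, (∑' k : {k : ℕ // (((j:ℝ)+1) * π)^2 - v ≤ E k}, a k.1)
      ≤ C₁ * Real.exp (-(C₂+ε) * (((j:ℝ)+1) * π)) * S := by
    intro j
    have h0 : -v ≤ (((j:ℝ)+1) * π)^2 - v := by nlinarith [sq_nonneg (((j:ℝ)+1)*π)]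
    have hs : Real.sqrt ((((j:ℝ)+1) * π)^2 - v + v) = ((j:ℝ)+1) * π := by
      rw [show (((j:ℝ)+1) * π)^2 - v + v = (((j:ℝ)+1) * π)^2 by ring]
      exact Real.sqrt_sq (by positivity)
    have := hproj ((((j:ℝ)+1) * π)^2 - v) h0
    rw [hs] at this
    exact this
  set B : ℝ := r + C₁ * (r - 1) * q / (1 - q) with hB_def
  have key : ∀ F : Finset ℕ,
      ∑ k ∈ F, Real.exp (C₂ * Real.sqrt (max 0 (E k))) * a k ≤ B * S := by
    intro F
    set N := F.sup n with hN_def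
    have step1 : ∑ k ∈ F, Real.exp (C₂ * Real.sqrt (max 0 (E k))) * a k
        ≤ r * (∑ k ∈ F, a k)
          + r * (r - 1) * ∑ k ∈ F, (∑ j ∈ range (n k), r ^ j) * a k := by
      calc ∑ k ∈ F, Real.exp (C₂ * Real.sqrt (max 0 (E k))) * a k
          ≤ ∑ k ∈ F, (r * r ^ (n k)) * a k :=
            Finset.sum_le_sum fun k _ => mul_le_mul_of_nonneg_right (hpt k) (ha k)
        _ = ∑ k ∈ F, (r * a k + r * (r-1) * ((∑ j ∈ range (n k), r ^ j) * a k)) := by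
            refine Finset.sum_congr rfl fun k _ => ?_
            have h2 : r ^ (n k) = 1 + (r - 1) * ∑ j ∈ range (n k), r ^ j := by
              linear_combination - geom_sum_mul r (n k)
            rw [h2]; ring
        _ = r * (∑ k ∈ F, a k)
            + r * (r-1) * ∑ k ∈ F, (∑ j ∈ range (n k), r ^ j) * a k := by
            rw [Finset.sum_add_distrib, ← Finset.mul_sum, ← Finset.mul_sum]
    have hswap : ∑ k ∈ F, (∑ j ∈ range (n k), r ^ j) * a k
        = ∑ j ∈ range N, ∑ k ∈ F, (if j < n k then r ^ j * a k else 0) := by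
      rw [Finset.sum_comm]
      refine Finset.sum_congr rfl fun k hk => ?_
      have hnk : n k ≤ N := Finset.le_sup hk
      have hfe : (range N).filter (fun j => j < n k) = range (n k) := by
        ext j
        simp only [Finset.mem_filter, Finset.mem_range]
        omega
      rw [← Finset.sum_filter, hfe, Finset.sum_mul]
    have hper : ∀ j : ℕ, r ^ j * (C₁ * Real.exp (-(C₂+ε) * (((j:ℝ)+1) * π)) * S)
        = C₁ * S * r⁻¹ * q * q ^ j := by
      intro j
      have e1 : r ^ j = Real.exp ((j:ℝ) * (C₂ * π)) := by
        rw [hr_def, Real.exp_nat_mul]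
      have e2 : q ^ j = Real.exp ((j:ℝ) * (-ε * π)) := by
        rw [hq_def, Real.exp_nat_mul]
      have e3 : r⁻¹ = Real.exp (-(C₂ * π)) := by rw [hr_def, Real.exp_neg]
      have e4 : Real.exp ((j:ℝ) * (C₂ * π)) * Real.exp (-(C₂+ε) * (((j:ℝ)+1) * π))
          = Real.exp (-(C₂ * π)) * (Real.exp (-ε * π) * Real.exp ((j:ℝ) * (-ε * π))) := by
        rw [← Real.exp_add, ← Real.exp_add, ← Real.exp_add]
        congr 1
        ring
      rw [e1, e2, e3, hq_def]
      linear_combination (C₁ * S) * e4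
    have hperle : ∀ j ∈ range N,
        ∑ k ∈ F, (if j < n k then r ^ j * a k else 0) ≤ C₁ * S * r⁻¹ * q * q ^ j := by
      intro j _
      have h1 : ∑ k ∈ F, (if j < n k then r ^ j * a k else 0)
          = r ^ j * ∑ k ∈ F.filter (fun k => j < n k), a k := by
        rw [Finset.mul_sum, Finset.sum_filter]
      have h2 : F.filter (fun k => j < n k)
          ⊆ F.filter (fun k => (((j:ℝ)+1) * π)^2 - v ≤ E k) := by
        intro k hk
        simp only [Finset.mem_filter] at hk ⊢
        exact ⟨hk.1, hjE j k hk.2⟩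
      have h3 : ∑ k ∈ F.filter (fun k => j < n k), a k
          ≤ ∑ k ∈ F.filter (fun k => (((j:ℝ)+1) * π)^2 - v ≤ E k), a k :=
        Finset.sum_le_sum_of_subset_of_nonneg h2 (fun k _ _ => ha k)
      have h4 : ∑ k ∈ F.filter (fun k => (((j:ℝ)+1) * π)^2 - v ≤ E k), a k
          ≤ ∑' k : {k : ℕ // (((j:ℝ)+1) * π)^2 - v ≤ E k}, a k.1 :=
        stmt7_filter_sum_le_tsum ha hsum _ F
      calc ∑ k ∈ F, (if j < n k then r ^ j * a k else 0)
          = r ^ j * ∑ k ∈ F.filter (fun k => j < n k), a k := h1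
        _ ≤ r ^ j * (C₁ * Real.exp (-(C₂+ε) * (((j:ℝ)+1) * π)) * S) := by
            apply mul_le_mul_of_nonneg_left _ (pow_nonneg hr0.le j)
            linarith [h3, h4, hHj j]
        _ = C₁ * S * r⁻¹ * q * q ^ j := hper j
    have hgeo : ∑ j ∈ range N, q ^ j ≤ 1 / (1 - q) := by
      rw [geom_sum_eq (ne_of_lt hq1)]
      have h6 : (q ^ N - 1)/(q - 1) = (1 - q ^ N)/(1 - q) := by
        rw [← neg_div_neg_eq]
        congr 1 <;> ring
      rw [h6]
      gcongr
      · nlinarith [pow_nonneg hq0.le N]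
    have hDnn : 0 ≤ C₁ * S * r⁻¹ * q :=
      mul_nonneg (mul_nonneg (mul_nonneg hC₁.le hS0) (inv_nonneg.mpr hr0.le)) hq0.le
    have step2 : ∑ k ∈ F, (∑ j ∈ range (n k), r ^ j) * a k
        ≤ (C₁ * S * r⁻¹ * q) * (1 / (1 - q)) := by
      rw [hswap]
      calc ∑ j ∈ range N, ∑ k ∈ F, (if j < n k then r ^ j * a k else 0)
          ≤ ∑ j ∈ range N, C₁ * S * r⁻¹ * q * q ^ j := Finset.sum_le_sum hperle
        _ = (C₁ * S * r⁻¹ * q) * ∑ j ∈ range N, q ^ j := by rw [Finset.mul_sum]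
        _ ≤ (C₁ * S * r⁻¹ * q) * (1/(1-q)) := mul_le_mul_of_nonneg_left hgeo hDnn
    have final : ∑ k ∈ F, a k ≤ S := Summable.sum_le_tsum F (fun k _ => ha k) hsum
    have h8 : 0 ≤ r * (r - 1) := by nlinarith
    calc ∑ k ∈ F, Real.exp (C₂ * Real.sqrt (max 0 (E k))) * a k
        ≤ r * (∑ k ∈ F, a k)
          + r * (r - 1) * ∑ k ∈ F, (∑ j ∈ range (n k), r ^ j) * a k := step1
      _ ≤ r * S + r * (r-1) * ((C₁ * S * r⁻¹ * q) * (1/(1-q))) := by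
          have t1 := mul_le_mul_of_nonneg_left final hr0.le
          have t2 := mul_le_mul_of_nonneg_left step2 h8
          linarith
      _ = B * S := by
          rw [hB_def]
          field_simp
  by_cases hLS : Summable (fun k => Real.exp (C₂ * Real.sqrt (max 0 (E k))) * a k)
  · exact Summable.tsum_le_of_sum_le hLS key
  · rw [tsum_eq_zero_of_not_summable hLS]
    have hB0 : 0 ≤ B := by
      rw [hB_def]
      have : 0 ≤ C₁ * (r - 1) * q / (1 - q) := by
        apply div_nonneg _ h1q.le
        exact mul_nonneg (mul_nonneg hC₁.le (by linarith)) hq0.le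
      linarith
    exact mul_nonneg hB0 hS0

/-- Lemma 3.1 of the paper, the B→A lemma: let `H = H_L = -Δ_L + V_L`
have eigenvalues `E_k` (increasing, counting multiplicity) with orthonormal eigenbasis
`ψ_k`, comparable via an enumeration `p` of the lattice `𝓘^d ⊂ ℤ^d` with the Laplacian
eigenvalues: `(π/L)²|p(k)|₂² - ‖V₋‖_∞ ≤ E_k ≤ (π/L)²|p(k)|₂² + ‖V₊‖_∞` (here
`v = ‖V₋‖_∞`, `w = ‖V₊‖_∞`).  If `‖χ_{[λ,∞)}(H)φ‖² ≤ C₁ e^{-(C₂+ε)√(λ+v)} ‖φ‖²` for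
all `λ ≥ -v`, then `∑_k e^{C₂√(max{0,E_k})} |α_k|² ≤ C₃ ∑_k |α_k|²` with
`C₃ = e^{C₂(π + w^{1/2})}(1 + C₁C₂π/(1-e^{-επ}))`, where `α_k = ⟨ψ_k,φ⟩`, so that
`‖χ_{[λ,∞)}(H)φ‖² = ∑_{k : E_k ≥ λ} |α_k|²` and `‖φ‖² = ∑_k |α_k|²`. -/
theorem stmt7 (d L : ℕ) (hd : 0 < d) (hL : 0 < L)
    (v w C₁ C₂ ε : ℝ) (hv : 0 ≤ v) (hw : 0 ≤ w)
    (hC₁ : 0 < C₁) (hC₂ : 0 < C₂) (hε : 0 < ε)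
    (E : ℕ → ℝ) (hE : Monotone E)
    (p : ℕ → (Fin d → ℤ)) (hp : Function.Injective p)
    (hcomp : ∀ k : ℕ,
      (π / L)^2 * (∑ i : Fin d, ((p k i : ℝ))^2) - v ≤ E k ∧
      E k ≤ (π / L)^2 * (∑ i : Fin d, ((p k i : ℝ))^2) + w)
    (α : ℕ → ℂ) (hsum : Summable fun k => ‖α k‖^2)
    (hproj : ∀ lam : ℝ, -v ≤ lam →
      (∑' k : {k : ℕ // lam ≤ E k}, ‖α k.1‖^2)
        ≤ C₁ * Real.exp (-(C₂ + ε) * Real.sqrt (lam + v)) * ∑' k : ℕ, ‖α k‖^2) :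
    (∑' k : ℕ, Real.exp (C₂ * Real.sqrt (max 0 (E k))) * ‖α k‖^2)
      ≤ Real.exp (C₂ * (π + Real.sqrt w)) * (1 + C₁ * C₂ * π / (1 - Real.exp (-ε * π)))
          * ∑' k : ℕ, ‖α k‖^2 := by
  have hπ : (0:ℝ) < π := Real.pi_pos
  have hEv : ∀ k, -v ≤ E k := by
    intro k
    have h1 := (hcomp k).1
    have h2 : 0 ≤ (π / L)^2 * (∑ i : Fin d, ((p k i : ℝ))^2) := by positivity
    linarith
  have main := stmt7_core C₁ C₂ ε v hC₁ hC₂ hε hv E hEv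
    (fun k => ‖α k‖^2) (fun k => sq_nonneg _) hsum hproj
  refine le_trans main ?_
  have hS0 : 0 ≤ ∑' k : ℕ, ‖α k‖^2 := tsum_nonneg fun k => sq_nonneg _
  apply mul_le_mul_of_nonneg_right _ hS0
  -- constants comparison
  set q : ℝ := Real.exp (-ε * π) with hq_def
  have hq0 : 0 < q := Real.exp_pos _
  have hq1 : q < 1 := by
    rw [hq_def, ← Real.exp_zero]
    exact Real.exp_lt_exp.mpr (by nlinarith)
  have h1q : 0 < 1 - q := by linarith
  set r : ℝ := Real.exp (C₂ * π) with hr_def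
  have hr0 : 0 < r := Real.exp_pos _
  have hr1 : 1 < r := by
    rw [hr_def, ← Real.exp_zero]
    exact Real.exp_lt_exp.mpr (by positivity)
  set R : ℝ := Real.exp (C₂ * (π + Real.sqrt w)) with hR_def
  have hrR : r ≤ R := by
    rw [hr_def, hR_def]
    apply Real.exp_le_exp.mpr
    nlinarith [Real.sqrt_nonneg w]
  have hx : r - 1 ≤ C₂ * π * r := by
    have h9 := Real.add_one_le_exp (-(C₂*π))
    have h10 : Real.exp (-(C₂*π)) * r = 1 := by
      rw [hr_def, ← Real.exp_add]
      simp
    nlinarith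
  have expand : R * (1 + C₁ * C₂ * π / (1 - q)) - (r + C₁ * (r - 1) * q / (1 - q))
      = (R * (1 - q) - r * (1 - q) + R * C₁ * C₂ * π - C₁ * (r - 1) * q) / (1 - q) := by
    field_simp
    ring
  have hnum : 0 ≤ R * (1 - q) - r * (1 - q) + R * C₁ * C₂ * π - C₁ * (r - 1) * q := by
    have t1 : r * (1 - q) ≤ R * (1 - q) := mul_le_mul_of_nonneg_right hrR h1q.le
    have t2 : C₁ * (r - 1) * q ≤ C₁ * (C₂ * π * r) := by
      have : (r - 1) * q ≤ C₂ * π * r := by nlinarith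
      nlinarith
    have t3 : C₁ * (C₂ * π * r) ≤ R * C₁ * C₂ * π := by
      have t4 := mul_le_mul_of_nonneg_left hrR (show (0:ℝ) ≤ C₁ * C₂ * π by positivity)
      nlinarith [t4]
    linarith
  have hdiff : 0 ≤ R * (1 + C₁ * C₂ * π / (1 - q)) - (r + C₁ * (r - 1) * q / (1 - q)) := by
    rw [expand]
    exact div_nonneg hnum h1q.le
  linarith
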